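/- Let U = {x ∈ ℝ^N : x_N ≤ γ(x')} with γ : ℝ^{N−1} → ℝ satisfying γ(x')/|x'| → −∞ as |x'| → +∞. Then B(U) = S^{N-1} \ {(0,...,0,−1)} and U(U) = {(0,...,0,−1)}. -/

import Mathlib

open Filter Metric Topology

/-! For `K ≥ 0` the function `x ↦ x_N + K |x'|` is `(1 + K)`-Lipschitz and positively homogeneous,
and superlinear decay of `γ`, with its local upper bounds, puts `U` below a level `C_K` of it.
A point at distance `d` from `U` therefore has height at most `C_K + (1 + K) d`, so along a ray
`τ ξ` on which the height is `τ a` with `a > 0` the distance to `U` grows at least like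
`τ a / (1 + K)`. Every unit direction except `-e_N` has positive height for some `K`, while the
ray in direction `-e_N` eventually lies in `U`. -/

/-- The first `n` coordinates of a point of `ℝ^{n+1}`. -/
noncomputable def firstCoords (n : ℕ) (x : EuclideanSpace ℝ (Fin (n + 1))) :
    EuclideanSpace ℝ (Fin n) :=
  WithLp.toLp 2 (fun i : Fin n => x i.castSucc)

/-- The subgraph `U = {x = (x', x_N) : x_N ≤ γ(x')}` of `γ : ℝ^{N-1} → ℝ`. -/
def subgraphSet (n : ℕ) (γ : EuclideanSpace ℝ (Fin n) → ℝ) :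
    Set (EuclideanSpace ℝ (Fin (n + 1))) :=
  {x | x (Fin.last n) ≤ γ (firstCoords n x)}

lemma le_mul_infDist_of_subset_sublevel {α : Type*} [PseudoMetricSpace α] {f : α → ℝ}
    {L C : ℝ} {s : Set α} (hL : 0 < L) (hf : ∀ x y, f x - f y ≤ L * dist x y)
    (hs : s.Nonempty) (hsub : s ⊆ {y | f y ≤ C}) (x : α) : f x - C ≤ L * infDist x s := by
  rw [← div_le_iff₀' hL, le_infDist hs]
  intro y hy
  have hfy : f y ≤ C := hsub hy
  rw [div_le_iff₀' hL]
  linarith [hf x y]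

lemma isBoundedUnder_infDist_smul_div {E : Type*} [NormedAddCommGroup E] [NormedSpace ℝ E]
    {s : Set E} (hs : s.Nonempty) (ξ : E) :
    IsBoundedUnder (· ≤ ·) atTop fun τ : ℝ => infDist (τ • ξ) s / τ := by
  obtain ⟨y, hy⟩ := hs
  refine isBoundedUnder_of_eventually_le (a := ‖ξ‖ + ‖y‖) ?_
  filter_upwards [eventually_ge_atTop 1] with τ hτ
  rw [div_le_iff₀ (by linarith)]
  calc infDist (τ • ξ) s ≤ ‖τ • ξ‖ + ‖y‖ :=
        (infDist_le_dist_of_mem hy).trans (by rw [dist_eq_norm]; exact norm_sub_le _ _)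
    _ = τ * ‖ξ‖ + ‖y‖ := by rw [norm_smul, Real.norm_of_nonneg (by linarith)]
    _ ≤ (‖ξ‖ + ‖y‖) * τ := by nlinarith [norm_nonneg y]

section Subgraph

variable {n : ℕ}

lemma norm_firstCoords_sq_add_sq_last (x : EuclideanSpace ℝ (Fin (n + 1))) :
    ‖firstCoords n x‖ ^ 2 + x (Fin.last n) ^ 2 = ‖x‖ ^ 2 := by
  rw [EuclideanSpace.norm_eq, EuclideanSpace.norm_eq, Real.sq_sqrt (by positivity),
    Real.sq_sqrt (by positivity)]
  simp [firstCoords, Fin.sum_univ_castSucc]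

lemma firstCoords_sub (x y : EuclideanSpace ℝ (Fin (n + 1))) :
    firstCoords n (x - y) = firstCoords n x - firstCoords n y := rfl

lemma firstCoords_smul (τ : ℝ) (x : EuclideanSpace ℝ (Fin (n + 1))) :
    firstCoords n (τ • x) = τ • firstCoords n x := rfl

lemma norm_firstCoords_le (x : EuclideanSpace ℝ (Fin (n + 1))) : ‖firstCoords n x‖ ≤ ‖x‖ :=
  le_of_pow_le_pow_left₀ two_ne_zero (norm_nonneg x)
    (by nlinarith [norm_firstCoords_sq_add_sq_last x, sq_nonneg (x (Fin.last n))])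

lemma abs_last_le_norm (x : EuclideanSpace ℝ (Fin (n + 1))) : |x (Fin.last n)| ≤ ‖x‖ :=
  abs_le_of_sq_le_sq
    (by nlinarith [norm_firstCoords_sq_add_sq_last x, sq_nonneg ‖firstCoords n x‖]) (norm_nonneg x)

noncomputable def coneHeight (n : ℕ) (K : ℝ) (x : EuclideanSpace ℝ (Fin (n + 1))) : ℝ :=
  x (Fin.last n) + K * ‖firstCoords n x‖

lemma coneHeight_sub_le {K : ℝ} (hK : 0 ≤ K) (x y : EuclideanSpace ℝ (Fin (n + 1))) :
    coneHeight n K x - coneHeight n K y ≤ (1 + K) * dist x y := by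
  have hlast : x (Fin.last n) - y (Fin.last n) ≤ dist x y :=
    (le_abs_self _).trans (dist_eq_norm x y ▸ abs_last_le_norm (x - y))
  have hfirst : ‖firstCoords n x‖ - ‖firstCoords n y‖ ≤ dist x y := by
    rw [dist_eq_norm]
    calc ‖firstCoords n x‖ - ‖firstCoords n y‖ ≤ ‖firstCoords n x - firstCoords n y‖ :=
          norm_sub_norm_le _ _
      _ ≤ ‖x - y‖ := firstCoords_sub x y ▸ norm_firstCoords_le (x - y)
  unfold coneHeight
  nlinarith

lemma coneHeight_smul (K : ℝ) {τ : ℝ} (hτ : 0 ≤ τ) (x : EuclideanSpace ℝ (Fin (n + 1))) :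
    coneHeight n K (τ • x) = τ * coneHeight n K x := by
  simp only [coneHeight, firstCoords_smul, norm_smul, Real.norm_of_nonneg hτ,
    PiLp.smul_apply, smul_eq_mul]
  ring

lemma firstCoords_single_last (c : ℝ) :
    firstCoords n (EuclideanSpace.single (Fin.last n) c) = 0 := by
  ext i
  simp [firstCoords]

lemma eq_neg_single_last_of_firstCoords_eq_zero {ξ : EuclideanSpace ℝ (Fin (n + 1))}
    (hξ : ‖ξ‖ = 1) (h₀ : firstCoords n ξ = 0) (hlast : ξ (Fin.last n) ≤ 0) :
    ξ = -EuclideanSpace.single (Fin.last n) 1 := by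
  have hsq := norm_firstCoords_sq_add_sq_last ξ
  rw [h₀, hξ, norm_zero] at hsq
  ext j
  induction j using Fin.lastCases with
  | last =>
    simp only [PiLp.neg_apply, PiLp.single_eq_same]
    nlinarith
  | cast i =>
    have : ξ i.castSucc = 0 := congrArg (· i) h₀
    simp [this, (Fin.castSucc_lt_last i).ne]

lemma exists_coneHeight_pos {ξ : EuclideanSpace ℝ (Fin (n + 1))} (hξ : ‖ξ‖ = 1)
    (hne : ξ ≠ -EuclideanSpace.single (Fin.last n) 1) : ∃ K, 0 ≤ K ∧ 0 < coneHeight n K ξ := by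
  by_cases h₀ : firstCoords n ξ = 0
  · refine ⟨0, le_rfl, ?_⟩
    simp only [coneHeight, zero_mul, add_zero]
    by_contra! hlast
    exact hne (eq_neg_single_last_of_firstCoords_eq_zero hξ h₀ hlast)
  · have hpos : 0 < ‖firstCoords n ξ‖ := norm_pos_iff.2 h₀
    refine ⟨2 / ‖firstCoords n ξ‖, by positivity, ?_⟩
    have := abs_le.1 (hξ ▸ abs_last_le_norm ξ)
    simp only [coneHeight, div_mul_cancel₀ _ hpos.ne']
    linarith

variable {γ : EuclideanSpace ℝ (Fin n) → ℝ}

lemma single_last_mem_subgraphSet :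
    EuclideanSpace.single (Fin.last n) (γ 0) ∈ subgraphSet n γ := by
  simp [subgraphSet, firstCoords_single_last]

lemma eventually_smul_neg_single_last_mem_subgraphSet :
    ∀ᶠ τ : ℝ in atTop, τ • -EuclideanSpace.single (Fin.last n) 1 ∈ subgraphSet n γ := by
  filter_upwards [eventually_ge_atTop (-γ 0)] with τ hτ
  show _ ≤ γ _
  rw [smul_neg, ← neg_smul, firstCoords_smul, firstCoords_single_last, smul_zero]
  simpa using neg_le.mp hτ

lemma subgraphSet_subset_coneHeight_le
    (hbdd : ∀ r : ℝ, ∃ M : ℝ, ∀ x' : EuclideanSpace ℝ (Fin n), ‖x'‖ ≤ r → γ x' ≤ M)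
    (hasymp : ∀ M : ℝ, ∃ R : ℝ, ∀ x' : EuclideanSpace ℝ (Fin n),
      R ≤ ‖x'‖ → γ x' ≤ M * ‖x'‖) {K : ℝ} (hK : 0 ≤ K) :
    ∃ C, subgraphSet n γ ⊆ {x | coneHeight n K x ≤ C} := by
  obtain ⟨R, hR⟩ := hasymp (-K)
  obtain ⟨M, hM⟩ := hbdd R
  refine ⟨max (M + K * R) 0, fun x hx => ?_⟩
  have hx : x (Fin.last n) ≤ γ (firstCoords n x) := hx
  simp only [coneHeight, Set.mem_ofPred_eq]
  rcases le_total ‖firstCoords n x‖ R with hsmall | hlarge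
  · nlinarith [hM _ hsmall, le_max_left (M + K * R) 0]
  · nlinarith [hR _ hlarge, le_max_right (M + K * R) 0]

lemma exists_pos_eventually_le_infDist_smul_div
    (hbdd : ∀ r : ℝ, ∃ M : ℝ, ∀ x' : EuclideanSpace ℝ (Fin n), ‖x'‖ ≤ r → γ x' ≤ M)
    (hasymp : ∀ M : ℝ, ∃ R : ℝ, ∀ x' : EuclideanSpace ℝ (Fin n),
      R ≤ ‖x'‖ → γ x' ≤ M * ‖x'‖)
    {ξ : EuclideanSpace ℝ (Fin (n + 1))} (hξ : ‖ξ‖ = 1)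
    (hne : ξ ≠ -EuclideanSpace.single (Fin.last n) 1) :
    ∃ c > 0, ∀ᶠ τ : ℝ in atTop, c ≤ infDist (τ • ξ) (subgraphSet n γ) / τ := by
  obtain ⟨K, hK, ha⟩ := exists_coneHeight_pos hξ hne
  obtain ⟨C, hC⟩ := subgraphSet_subset_coneHeight_le hbdd hasymp hK
  have hbound := le_mul_infDist_of_subset_sublevel (by linarith) (coneHeight_sub_le hK)
    ⟨_, single_last_mem_subgraphSet⟩ hC
  set a := coneHeight n K ξ
  refine ⟨a / (2 * (1 + K)), by positivity, ?_⟩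
  filter_upwards [eventually_ge_atTop (max (2 * C / a) 1)] with τ hτ
  have hτ₀ : 0 < τ := lt_of_lt_of_le one_pos ((le_max_right _ _).trans hτ)
  have hτC : 2 * C ≤ τ * a := (div_le_iff₀ ha).1 ((le_max_left _ _).trans hτ)
  have := hbound (τ • ξ)
  rw [coneHeight_smul K hτ₀.le] at this
  rw [le_div_iff₀ hτ₀, div_mul_eq_mul_div, div_le_iff₀ (by positivity)]
  nlinarith

end Subgraph

theorem subgraph_superlinear_directions_general (n : ℕ)
    (γ : EuclideanSpace ℝ (Fin n) → ℝ)
    (hloc : ∀ r : ℝ, ∃ M : ℝ, ∀ x' : EuclideanSpace ℝ (Fin n), ‖x'‖ ≤ r → |γ x'| ≤ M)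
    (hasymp : ∀ M : ℝ, ∃ R : ℝ, ∀ x' : EuclideanSpace ℝ (Fin n),
      R ≤ ‖x'‖ → γ x' ≤ M * ‖x'‖) :
    ∀ ξ : EuclideanSpace ℝ (Fin (n + 1)), ‖ξ‖ = 1 →
      ((0 < Filter.liminf
          (fun τ : ℝ => Metric.infDist (τ • ξ) (subgraphSet n γ) / τ) Filter.atTop)
        ↔ ξ ≠ -EuclideanSpace.single (Fin.last n) (1 : ℝ)) ∧
      ((Filter.Tendsto
          (fun τ : ℝ => Metric.infDist (τ • ξ) (subgraphSet n γ) / τ)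
          Filter.atTop (nhds 0))
        ↔ ξ = -EuclideanSpace.single (Fin.last n) (1 : ℝ)) := by
  intro ξ hξ
  set u := fun τ : ℝ => infDist (τ • ξ) (subgraphSet n γ) / τ
  by_cases hdown : ξ = -EuclideanSpace.single (Fin.last n) 1
  · have hzero : u =ᶠ[atTop] fun _ => 0 := by
      filter_upwards [hdown ▸ eventually_smul_neg_single_last_mem_subgraphSet (γ := γ)]
        with τ hτ
      simp [u, infDist_zero_of_mem hτ]
    simp [hdown, liminf_congr hzero, tendsto_const_nhds.congr' hzero.symm]
  · have hbdd r : ∃ M, ∀ x' : EuclideanSpace ℝ (Fin n), ‖x'‖ ≤ r → γ x' ≤ M :=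
      (hloc r).imp fun _ hM x' hx' => (le_abs_self _).trans (hM x' hx')
    obtain ⟨c, hc, hcu⟩ := exists_pos_eventually_le_infDist_smul_div hbdd hasymp hξ hdown
    have hliminf : c ≤ liminf u atTop :=
      le_liminf_of_le (isBoundedUnder_infDist_smul_div ⟨_, single_last_mem_subgraphSet⟩ ξ
        |>.isCoboundedUnder_flip) hcu
    refine ⟨iff_of_true (hc.trans_le hliminf) hdown, iff_of_false (fun htend => ?_) hdown⟩
    obtain ⟨τ, hcτ, hτc⟩ := (hcu.and (htend.eventually_lt_const hc)).exists
    exact hτc.not_ge hcτ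

/-- if `γ(x')/|x'| → −∞` as `|x'| → +∞` (with `γ` locally bounded),
then for the subgraph `U` of `γ`, `B(U) = S^{N-1} \ {(0,…,0,−1)}` and
`U(U) = {(0,…,0,−1)}`. -/
theorem subgraph_superlinear_directions (n : ℕ) (hn : 1 ≤ n)
    (γ : EuclideanSpace ℝ (Fin n) → ℝ)
    (hloc : ∀ r : ℝ, ∃ M : ℝ, ∀ x' : EuclideanSpace ℝ (Fin n), ‖x'‖ ≤ r → |γ x'| ≤ M)
    (hasymp : ∀ M : ℝ, ∃ R : ℝ, ∀ x' : EuclideanSpace ℝ (Fin n),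
      R ≤ ‖x'‖ → γ x' ≤ M * ‖x'‖) :
    ∀ ξ : EuclideanSpace ℝ (Fin (n + 1)), ‖ξ‖ = 1 →
      ((0 < Filter.liminf
          (fun τ : ℝ => Metric.infDist (τ • ξ) (subgraphSet n γ) / τ) Filter.atTop)
        ↔ ξ ≠ -EuclideanSpace.single (Fin.last n) (1 : ℝ)) ∧
      ((Filter.Tendsto
          (fun τ : ℝ => Metric.infDist (τ • ξ) (subgraphSet n γ) / τ)
          Filter.atTop (nhds 0))
        ↔ ξ = -EuclideanSpace.single (Fin.last n) (1 : ℝ)) :=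
  subgraph_superlinear_directions_general n γ hloc hasymp
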